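/- If G is a non-complete double-critical k-chromatic graph, then for every vertex x of G there exists a neighbour y of x such that the set A(xy) = N(x) \ N[y] is non-empty, i.e. some neighbour of x is distinct from y and not adjacent to y. -/

import Mathlib

/-!
A vertex-critical graph has minimum degree at least `χ(G) - 1`: a colouring of `G - x` with
fewer than `χ(G)` colours cannot leave a colour free on `N(x)`. If the neighbours of `x` were
pairwise adjacent, `N[x]` would be a clique of size `deg x + 1 ≥ χ(G)`. As `G` is not complete,
some vertex `u` lies outside `N[x]`, and `G - u` still contains that clique, contradicting
`χ(G - u) < χ(G)`.
-/

open SimpleGraph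

/-- A graph is vertex-critical if deleting any vertex decreases the chromatic number. -/
def VertexCritical {V : Type} (G : SimpleGraph V) : Prop :=
  ∀ v : V, (G.induce ({v}ᶜ : Set V)).chromaticNumber < G.chromaticNumber

/-- A vertex-critical graph is double-critical if deleting the two end-vertices of any
edge decreases the chromatic number by at least two. -/
def DoubleCritical {V : Type} (G : SimpleGraph V) : Prop :=
  VertexCritical G ∧
  ∀ x y : V, G.Adj x y →
    (G.induce ({x, y}ᶜ : Set V)).chromaticNumber + 2 ≤ G.chromaticNumber

namespace SimpleGraph

variable {V : Type*} {G : SimpleGraph V}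

theorem Colorable.of_induce_compl_singleton {x : V} [Fintype (G.neighborSet x)] {n : ℕ}
    (h : (G.induce ({x}ᶜ : Set V)).Colorable n) (hx : G.degree x < n) : G.Colorable n := by
  classical
  obtain ⟨C⟩ := h
  let c : V → Fin n := fun v => if hv : v = x then ⟨0, by omega⟩ else C ⟨v, hv⟩
  have hc : ∀ v w, v ≠ x → w ≠ x → G.Adj v w → c v ≠ c w := fun v w hv hw hvw => by
    simpa [c, hv, hw] using C.valid (v := ⟨v, hv⟩) (w := ⟨w, hw⟩) hvw
  obtain ⟨a, -, ha⟩ := Finset.exists_mem_notMem_of_card_lt_card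
    (s := (G.neighborFinset x).image c) (t := Finset.univ) <| by
      simpa using Finset.card_image_le.trans_lt hx
  have ha' : ∀ w, G.Adj x w → c w ≠ a := fun w hw hwa =>
    ha (Finset.mem_image.mpr ⟨w, (G.mem_neighborFinset x w).mpr hw, hwa⟩)
  refine ⟨Coloring.mk (fun v => if v = x then a else c v) fun {v w} hvw => ?_⟩
  by_cases hv : v = x <;> by_cases hw : w = x
  · exact absurd (hv.trans hw.symm) hvw.ne
  · subst hv; simpa [hw] using (ha' w hvw).symm
  · subst hw; simpa [hv] using ha' v hvw.symm
  · simpa [hv, hw] using hc v w hv hw hvw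

theorem chromaticNumber_le_max_induce_compl_singleton (x : V) [Fintype (G.neighborSet x)] :
    G.chromaticNumber ≤ max (G.induce ({x}ᶜ : Set V)).chromaticNumber (G.degree x + 1) := by
  by_cases htop : (G.induce ({x}ᶜ : Set V)).chromaticNumber = ⊤
  · simp [htop]
  obtain ⟨n, hn⟩ := ENat.ne_top_iff_exists.mp htop
  have hcol : (G.induce ({x}ᶜ : Set V)).Colorable (max n (G.degree x + 1)) :=
    (chromaticNumber_le_iff_colorable.mp hn.ge).mono (le_max_left _ _)
  rw [← hn]
  exact_mod_cast (hcol.of_induce_compl_singleton (by omega)).chromaticNumber_le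

theorem chromaticNumber_le_degree_add_one {x : V} [Fintype (G.neighborSet x)]
    (hx : (G.induce ({x}ᶜ : Set V)).chromaticNumber < G.chromaticNumber) :
    G.chromaticNumber ≤ G.degree x + 1 :=
  (le_max_iff.mp (chromaticNumber_le_max_induce_compl_singleton x)).resolve_left hx.not_ge

theorem IsClique.card_le_chromaticNumber_induce {s : Finset V} {S : Set V} (hs : G.IsClique s)
    (hsS : ↑s ⊆ S) : s.card ≤ (G.induce S).chromaticNumber :=
  le_chromaticNumber_of_pairwise_adj (by simp) (fun v : s => (⟨v, hsS v.2⟩ : S))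
    fun v w hvw => hs v.2 w.2 (Subtype.coe_ne_coe.mpr hvw)

end SimpleGraph

theorem VertexCritical.not_isClique_insert_neighborSet {V : Type} [Fintype V] {G : SimpleGraph V}
    (hG : VertexCritical G) (hne : G ≠ ⊤) (x : V) :
    ¬ G.IsClique (insert x (G.neighborSet x)) := by
  classical
  intro hclique
  obtain ⟨u, hu⟩ : ∃ u, u ∉ insert x (G.neighborSet x) := by
    by_contra! hall
    exact hne (isClique_univ.mp (Set.eq_univ_of_forall hall ▸ hclique))
  have hclique' : G.IsClique ↑(insert x (G.neighborFinset x)) := by simpa using hclique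
  have hlower := hclique'.card_le_chromaticNumber_induce (S := {u}ᶜ) fun v hv hvu => by
    rw [Set.mem_singleton_iff] at hvu
    exact hu (by simpa [hvu] using hv)
  have hupper := chromaticNumber_le_degree_add_one (hG x)
  rw [Finset.card_insert_of_notMem (by simp), card_neighborFinset_eq_degree] at hlower
  exact (hG u).not_ge (by push_cast at hlower; exact hupper.trans hlower)

theorem stmt4_general {V : Type} [Fintype V] (G : SimpleGraph V)
    (hnc : G ≠ ⊤) (hdc : DoubleCritical G) (x : V) :
    ∃ y : V, G.Adj x y ∧ ∃ z : V, G.Adj x z ∧ z ≠ y ∧ ¬ G.Adj y z := by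
  by_contra! h
  refine hdc.1.not_isClique_insert_neighborSet hnc x (isClique_insert.mpr ⟨?_, fun _ hy _ => hy⟩)
  exact fun y hy z hz hyz => h y hy z hz hyz.symm

/-- In a non-complete double-critical `k`-chromatic graph `G`, every vertex `x` has a
neighbour `y` such that `A(xy) = N(x) \ N[y]` is non-empty: some neighbour `z` of `x` is
distinct from `y` and not adjacent to `y`. -/
theorem stmt4 {V : Type} [Fintype V] (G : SimpleGraph V) (k : ℕ)
    (hnc : G ≠ ⊤) (hdc : DoubleCritical G) (hchrom : G.chromaticNumber = k) (x : V) :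
    ∃ y : V, G.Adj x y ∧ ∃ z : V, G.Adj x z ∧ z ≠ y ∧ ¬ G.Adj y z :=
  stmt4_general G hnc hdc x
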